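/- arXiv:2111.10323 — 2 statements merged into one kernel-verified Lean document; each statement's English description precedes it below -/
import Mathlib

section
/- Let $0 < d \le 1 \le u$ with $u \ne d$, and set $\tilde{k}_0(n,u,d) = \lfloor n \ln(1/d)/\ln(u/d) \rfloor$. Then $A(n,u,d) = (1/2)^n \sum_{k=0}^{\tilde{k}_0(n,u,d)} \binom{n}{k} u^k d^{n-k} \to 0$ as $n \to \infty$. -/
/-!
With `r = u / d > 1` the `k`-th term is `C(n,k) d^n r^k`, and `ktilde n u d` is the largest `k`
with `d^n r^k ≤ 1`. Bounding every `C(n,k)` by the middle one and summing the geometric series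
`∑_{k ≤ ktilde} r^(k - ktilde) ≤ r / (r - 1)` gives
`A n u d ≤ r / (r - 1) · C(n, n/2) / 2^n`, and the middle binomial probability tends to `0`
because `(2m + 1) C(2m, m)^2 ≤ 16^m`.
-/

open Filter

/-- Threshold separating losing from winning numbers of heads. -/
noncomputable def ktilde (n : ℕ) (u d : ℝ) : ℕ :=
  ⌊(n : ℝ) * Real.log (1/d) / Real.log (u/d)⌋₊

/-- Contribution of the losing outcomes to the expected payout (fair coin). -/
noncomputable def A (n : ℕ) (u d : ℝ) : ℝ :=
  (1/2 : ℝ)^n * ∑ k ∈ Finset.range (ktilde n u d + 1), (n.choose k : ℝ) * u^k * d^(n-k)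

open Topology Finset

theorem Nat.two_mul_add_one_mul_centralBinom_sq_le (m : ℕ) :
    (2 * m + 1) * m.centralBinom ^ 2 ≤ 16 ^ m := by
  induction m with
  | zero => simp
  | succ m ih =>
    refine Nat.le_of_mul_le_mul_right (c := (m + 1) ^ 2) ?_ (by positivity)
    calc (2 * (m + 1) + 1) * (m + 1).centralBinom ^ 2 * (m + 1) ^ 2
        = (2 * m + 3) * ((m + 1) * (m + 1).centralBinom) ^ 2 := by ring
      _ = 4 * (2 * m + 1) * (2 * m + 3) * ((2 * m + 1) * m.centralBinom ^ 2) := by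
          rw [Nat.succ_mul_centralBinom_succ]; ring
      _ ≤ 4 * (2 * m + 1) * (2 * m + 3) * 16 ^ m := Nat.mul_le_mul_left _ ih
      _ ≤ 16 * (m + 1) ^ 2 * 16 ^ m := Nat.mul_le_mul_right _ (by nlinarith)
      _ = 16 ^ (m + 1) * (m + 1) ^ 2 := by ring

theorem tendsto_centralBinom_div_four_pow :
    Tendsto (fun m : ℕ => (m.centralBinom : ℝ) / 4 ^ m) atTop (𝓝 0) := by
  have hsq : Tendsto (fun m : ℕ => ((m.centralBinom : ℝ) / 4 ^ m) ^ 2) atTop (𝓝 0) := by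
    refine squeeze_zero (fun _ => sq_nonneg _) (fun m => ?_)
      tendsto_one_div_add_atTop_nhds_zero_nat
    have h : ((2 * m + 1 : ℕ) : ℝ) * (m.centralBinom : ℝ) ^ 2 ≤ 16 ^ m := by
      exact_mod_cast Nat.two_mul_add_one_mul_centralBinom_sq_le m
    push_cast at h
    calc ((m.centralBinom : ℝ) / 4 ^ m) ^ 2 = (m.centralBinom : ℝ) ^ 2 / 16 ^ m := by
          rw [div_pow, ← pow_mul, pow_mul']; norm_num
      _ ≤ 1 / ((m : ℝ) + 1) := by
          rw [div_le_div_iff₀ (by positivity) (by positivity)]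
          nlinarith [sq_nonneg (m.centralBinom : ℝ), (m.cast_nonneg : (0 : ℝ) ≤ m)]
  simpa [Real.sqrt_sq (div_nonneg (Nat.cast_nonneg _) (pow_nonneg zero_le_four _))]
    using hsq.sqrt

theorem choose_half_div_two_pow_le (n : ℕ) :
    (n.choose (n / 2) : ℝ) / 2 ^ n ≤ 2 * (((n + 1) / 2).centralBinom / 4 ^ ((n + 1) / 2)) := by
  set m := (n + 1) / 2
  have hchoose : n.choose (n / 2) ≤ m.centralBinom :=
    (Nat.choose_le_choose _ (by omega : n ≤ 2 * m)).trans (Nat.choose_le_centralBinom _ _)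
  have hpow : (4 : ℝ) ^ m ≤ 2 * 2 ^ n := by
    rw [show (4 : ℝ) = 2 ^ 2 by norm_num, ← pow_mul, ← pow_succ']
    exact pow_le_pow_right₀ one_le_two (by omega)
  rw [mul_div_assoc', div_le_div_iff₀ (by positivity) (by positivity)]
  calc (n.choose (n / 2) : ℝ) * 4 ^ m ≤ m.centralBinom * (2 * 2 ^ n) := by gcongr
    _ = 2 * m.centralBinom * 2 ^ n := by ring

theorem tendsto_choose_half_div_two_pow :
    Tendsto (fun n : ℕ => (n.choose (n / 2) : ℝ) / 2 ^ n) atTop (𝓝 0) := by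
  have hm : Tendsto (fun n : ℕ => (n + 1) / 2) atTop atTop :=
    (Nat.tendsto_div_const_atTop two_ne_zero).comp (tendsto_add_atTop_nat 1)
  refine squeeze_zero (fun _ => by positivity) choose_half_div_two_pow_le ?_
  simpa using (tendsto_centralBinom_div_four_pow.comp hm).const_mul 2

theorem sum_range_choose_mul_pow_le (n m : ℕ) {r : ℝ} (hr : 1 < r) :
    ∑ k ∈ range (m + 1), (n.choose k : ℝ) * r ^ k
      ≤ n.choose (n / 2) * (r ^ (m + 1) / (r - 1)) := by
  calc ∑ k ∈ range (m + 1), (n.choose k : ℝ) * r ^ k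
      ≤ ∑ k ∈ range (m + 1), (n.choose (n / 2) : ℝ) * r ^ k := by
        gcongr; exact_mod_cast Nat.choose_le_middle _ n
    _ = n.choose (n / 2) * ((r ^ (m + 1) - 1) / (r - 1)) := by
        rw [← mul_sum, geom_sum_eq hr.ne']
    _ ≤ n.choose (n / 2) * (r ^ (m + 1) / (r - 1)) := by
        gcongr
        linarith

theorem choose_mul_pow_mul_pow_sub_eq (n k : ℕ) (u : ℝ) {d : ℝ} (hd : d ≠ 0) :
    (n.choose k : ℝ) * u ^ k * d ^ (n - k) = n.choose k * d ^ n * (u / d) ^ k := by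
  rcases le_or_gt k n with hk | hk
  · rw [div_pow, ← Nat.sub_add_cancel hk, pow_add, Nat.add_sub_cancel]
    field_simp
  · simp [Nat.choose_eq_zero_of_lt hk]

theorem pow_mul_div_pow_ktilde_le_one (n : ℕ) {u d : ℝ} (hd0 : 0 < d) (hd1 : d ≤ 1)
    (hdu : d < u) : d ^ n * (u / d) ^ ktilde n u d ≤ 1 := by
  have hr : 0 < Real.log (u / d) := Real.log_pos ((one_lt_div hd0).mpr hdu)
  have hfloor : (ktilde n u d : ℝ) * Real.log (u / d) ≤ n * Real.log (1 / d) := by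
    rw [← le_div_iff₀ hr]
    exact Nat.floor_le (div_nonneg (mul_nonneg n.cast_nonneg
      (Real.log_nonneg (one_le_one_div hd0 hd1))) hr.le)
  have hpow : (u / d) ^ ktilde n u d ≤ (1 / d) ^ n := by
    have hu0 : 0 < u := hd0.trans hdu
    rwa [← Real.log_le_log_iff (by positivity) (by positivity), Real.log_pow, Real.log_pow]
  calc d ^ n * (u / d) ^ ktilde n u d ≤ d ^ n * (1 / d) ^ n := by gcongr
    _ = 1 := by rw [← mul_pow, mul_one_div_cancel hd0.ne', one_pow]

theorem A_nonneg (n : ℕ) {u d : ℝ} (hu : 0 ≤ u) (hd : 0 ≤ d) : 0 ≤ A n u d := by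
  unfold A; positivity

theorem A_le_mul_choose_half_div_two_pow (n : ℕ) {u d : ℝ} (hd0 : 0 < d) (hd1 : d ≤ 1)
    (hdu : d < u) :
    A n u d ≤ (u / d) / (u / d - 1) * ((n.choose (n / 2) : ℝ) / 2 ^ n) := by
  set r := u / d
  set m := ktilde n u d
  have hr : 1 < r := (one_lt_div hd0).mpr hdu
  have hsum : ∑ k ∈ range (m + 1), (n.choose k : ℝ) * u ^ k * d ^ (n - k)
      ≤ n.choose (n / 2) * (r / (r - 1)) := by
    simp_rw [choose_mul_pow_mul_pow_sub_eq n _ u hd0.ne', mul_right_comm _ (d ^ n), ← sum_mul]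
    calc (∑ k ∈ range (m + 1), (n.choose k : ℝ) * r ^ k) * d ^ n
        ≤ n.choose (n / 2) * (r ^ (m + 1) / (r - 1)) * d ^ n := by
          gcongr; exact sum_range_choose_mul_pow_le n m hr
      _ = n.choose (n / 2) * (r / (r - 1)) * (d ^ n * r ^ m) := by ring
      _ ≤ n.choose (n / 2) * (r / (r - 1)) := by
          have : 0 < r - 1 := by linarith
          exact mul_le_of_le_one_right (by positivity)
            (pow_mul_div_pow_ktilde_le_one n hd0 hd1 hdu)
  calc A n u d ≤ (1 / 2) ^ n * (n.choose (n / 2) * (r / (r - 1))) := by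
        unfold A; gcongr
    _ = r / (r - 1) * ((n.choose (n / 2) : ℝ) / 2 ^ n) := by rw [one_div_pow]; ring

theorem losing_contribution_tendsto_zero (u d : ℝ)
    (hd0 : 0 < d) (hd1 : d ≤ 1) (hu : 1 ≤ u) (hne : u ≠ d) :
    Tendsto (fun n : ℕ => A n u d) atTop (nhds 0) := by
  have hdu : d < u := lt_of_le_of_ne (hd1.trans hu) hne.symm
  refine squeeze_zero (fun n => A_nonneg n (hd0.trans hdu).le hd0.le)
    (fun n => A_le_mul_choose_half_div_two_pow n hd0 hd1 hdu) ?_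
  simpa using tendsto_choose_half_div_two_pow.const_mul ((u / d) / (u / d - 1))
end

section
/- Let $p \in (0,1)$, $0 < d \le 1 \le u$ with $u \ne d$ and $u^p d^{1-p} \ne 1$, $\tilde{k}_0(n,u,d) = \lfloor n \ln(1/d)/\ln(u/d) \rfloor$, let $X_n$ be a Binomial$(n,p)$ random variable, and define the net profit $T_n = -1 + \sum_{k=0}^{\tilde{k}_0(n,u,d)} \mathbf{1}\{X_n = k\}\, u^k d^{n-k} + 2\cdot\mathbf{1}\{X_n \ge \tilde{k}_0(n,u,d)+1\}$. Then $T_n$ converges in probability to $1$ if $u^p d^{1-p} > 1$, and converges in probability to $-1$ if $u^p d^{1-p} < 1$. -/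
/-!
Put `κ = log (1/d) / log (u/d)`, so that `k̃₀ = ⌊n κ⌋`, `u ^ k d ^ (n - k) = exp ((k - n κ) log (u/d))`
and `u ^ p d ^ (1 - p) = exp ((p - κ) log (u/d))`; the two regimes are `κ < p` and `p < κ`.
The profit is `1` as soon as `X_n > n κ`. If `κ < p`, Chebyshev's inequality for the binomial law
makes `X_n ≤ n κ` unlikely. If `p < κ`, it makes `X_n > (κ - δ) n` unlikely, and on the complement
the profit is `-1 + u ^ X_n d ^ (n - X_n) ≤ -1 + exp (-δ n log (u/d))`, which tends to `-1`.
-/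

open Filter MeasureTheory

open Finset Real Topology

section Bernstein

open Polynomial

variable {n : ℕ} {p : ℝ}

lemma eval_bernsteinPolynomial (n k : ℕ) (p : ℝ) :
    (bernsteinPolynomial ℝ n k).eval p = n.choose k * p ^ k * (1 - p) ^ (n - k) := by
  simp [bernsteinPolynomial]

lemma eval_bernsteinPolynomial_nonneg (hp0 : 0 ≤ p) (hp1 : p ≤ 1) (k : ℕ) :
    0 ≤ (bernsteinPolynomial ℝ n k).eval p := by
  rw [eval_bernsteinPolynomial]
  have : 0 ≤ 1 - p := by linarith
  positivity

lemma sum_eval_bernsteinPolynomial (n : ℕ) (p : ℝ) :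
    ∑ k ∈ range (n + 1), (bernsteinPolynomial ℝ n k).eval p = 1 := by
  simpa [eval_finsetSum] using congrArg (eval p) (bernsteinPolynomial.sum ℝ n)

lemma sum_sq_mul_eval_bernsteinPolynomial (n : ℕ) (p : ℝ) :
    ∑ k ∈ range (n + 1), ((k : ℝ) - n * p) ^ 2 * (bernsteinPolynomial ℝ n k).eval p
      = n * p * (1 - p) := by
  have h := congrArg (eval p) (bernsteinPolynomial.variance ℝ n)
  simp only [eval_finsetSum, eval_mul, eval_pow, eval_sub, eval_X, eval_natCast,
    eval_one, nsmul_eq_mul] at h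
  rw [← h]
  refine sum_congr rfl fun k _ => ?_
  ring

/-- Chebyshev's inequality for the binomial weights. -/
lemma sum_filter_eval_bernsteinPolynomial_le (hp0 : 0 ≤ p) (hp1 : p ≤ 1) {t : ℝ} (ht : 0 < t) :
    ∑ k ∈ (range (n + 1)).filter (fun k : ℕ => t ≤ |(k : ℝ) - n * p|),
      (bernsteinPolynomial ℝ n k).eval p ≤ n * p * (1 - p) / t ^ 2 := by
  rw [le_div_iff₀ (by positivity), ← sum_sq_mul_eval_bernsteinPolynomial, sum_mul]
  calc ∑ k ∈ (range (n + 1)).filter (fun k : ℕ => t ≤ |(k : ℝ) - n * p|),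
        (bernsteinPolynomial ℝ n k).eval p * t ^ 2
      ≤ ∑ k ∈ (range (n + 1)).filter (fun k : ℕ => t ≤ |(k : ℝ) - n * p|),
        ((k : ℝ) - n * p) ^ 2 * (bernsteinPolynomial ℝ n k).eval p := by
        refine sum_le_sum fun k hk => ?_
        have htk : t ^ 2 ≤ ((k : ℝ) - n * p) ^ 2 := by
          simpa only [sq_abs] using pow_le_pow_left₀ ht.le (mem_filter.1 hk).2 2
        nlinarith [eval_bernsteinPolynomial_nonneg (n := n) hp0 hp1 k]
    _ ≤ _ := sum_le_sum_of_subset_of_nonneg (filter_subset _ _) fun k _ _ =>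
        mul_nonneg (sq_nonneg _) (eval_bernsteinPolynomial_nonneg hp0 hp1 k)

end Bernstein

section BinomialLaw

variable {Ω : Type*} [MeasurableSpace Ω] {μ : Measure Ω} {X : Ω → ℕ} {n : ℕ} {p : ℝ}

/-- The binomial weights are expressed through `bernsteinPolynomial`, whose sum and variance
identities then give the total mass and the variance of the law. -/
def HasBinomialLaw (μ : Measure Ω) (X : Ω → ℕ) (n : ℕ) (p : ℝ) : Prop :=
  ∀ k, μ {ω | X ω = k} = ENNReal.ofReal ((bernsteinPolynomial ℝ n k).eval p)

lemma HasBinomialLaw.measure_preimage_finset (h : HasBinomialLaw μ X n p) (hX : Measurable X)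
    (hp0 : 0 ≤ p) (hp1 : p ≤ 1) (s : Finset ℕ) :
    μ (X ⁻¹' s) = ENNReal.ofReal (∑ k ∈ s, (bernsteinPolynomial ℝ n k).eval p) := by
  rw [← sum_measure_preimage_singleton s fun k _ => hX (measurableSet_singleton k),
    ENNReal.ofReal_sum_of_nonneg fun k _ => eval_bernsteinPolynomial_nonneg hp0 hp1 k]
  exact sum_congr rfl fun k _ => h k

lemma HasBinomialLaw.ae_le [IsProbabilityMeasure μ] (h : HasBinomialLaw μ X n p)
    (hX : Measurable X) (hp0 : 0 ≤ p) (hp1 : p ≤ 1) : ∀ᵐ ω ∂μ, X ω ≤ n := by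
  rw [ae_iff_measure_eq (p := fun ω => X ω ≤ n) (hX measurableSet_Iic).nullMeasurableSet,
    measure_univ]
  have := h.measure_preimage_finset hX hp0 hp1 (range (n + 1))
  rw [sum_eval_bernsteinPolynomial, ENNReal.ofReal_one] at this
  convert this using 2
  ext ω
  simp

lemma HasBinomialLaw.measure_le_abs_sub_le [IsProbabilityMeasure μ] (h : HasBinomialLaw μ X n p)
    (hX : Measurable X) (hp0 : 0 ≤ p) (hp1 : p ≤ 1) {t : ℝ} (ht : 0 < t) :
    μ {ω | t ≤ |(X ω : ℝ) - n * p|} ≤ ENNReal.ofReal (n * p * (1 - p) / t ^ 2) := by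
  calc μ {ω | t ≤ |(X ω : ℝ) - n * p|}
      ≤ μ (X ⁻¹' ((range (n + 1)).filter (fun k : ℕ => t ≤ |(k : ℝ) - n * p|))) := by
        refine measure_mono_ae ?_
        filter_upwards [h.ae_le hX hp0 hp1] with ω hω (hωt : t ≤ _)
        show X ω ∈ ((range (n + 1)).filter _ : Set ℕ)
        simpa [Nat.lt_add_one_iff] using And.intro hω hωt
    _ = _ := h.measure_preimage_finset hX hp0 hp1 _
    _ ≤ _ := ENNReal.ofReal_le_ofReal (sum_filter_eval_bernsteinPolynomial_le hp0 hp1 ht)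

lemma tendsto_measure_le_abs_sub_of_hasBinomialLaw [IsProbabilityMeasure μ] {X : ℕ → Ω → ℕ}
    (h : ∀ n, HasBinomialLaw μ (X n) n p) (hX : ∀ n, Measurable (X n))
    (hp0 : 0 ≤ p) (hp1 : p ≤ 1) {δ : ℝ} (hδ : 0 < δ) :
    Tendsto (fun n : ℕ => μ {ω | δ * n ≤ |(X n ω : ℝ) - n * p|}) atTop (𝓝 0) := by
  have hlim : Tendsto (fun n : ℕ => ENNReal.ofReal (p * (1 - p) / δ ^ 2 / n)) atTop (𝓝 0) := by
    simpa using ENNReal.tendsto_ofReal (tendsto_const_div_atTop_nhds_zero_nat _)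
  refine tendsto_of_tendsto_of_tendsto_of_le_of_le' tendsto_const_nhds hlim
    (Eventually.of_forall fun _ => zero_le) ?_
  filter_upwards [eventually_gt_atTop 0] with n hn
  have hn' : (0 : ℝ) < n := Nat.cast_pos.2 hn
  calc _ ≤ _ := (h n).measure_le_abs_sub_le (hX n) hp0 hp1 (mul_pos hδ hn')
    _ = _ := by congr 1; field_simp

end BinomialLaw

section NetProfit

variable {u d : ℝ}

/-- The fraction of heads at which the payoff `u ^ k * d ^ (n - k)` equals `1`. -/
noncomputable def breakEvenFraction (u d : ℝ) : ℝ :=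
  log (1 / d) / log (u / d)

lemma ktilde_eq_floor (n : ℕ) (u d : ℝ) : ktilde n u d = ⌊n * breakEvenFraction u d⌋₊ := by
  rw [ktilde, breakEvenFraction, mul_div_assoc]

lemma rpow_mul_rpow_sub_eq_exp (hd : 0 < d) (hdu : d < u) (x y : ℝ) :
    u ^ x * d ^ (y - x) = exp ((x - y * breakEvenFraction u d) * log (u / d)) := by
  have hu : 0 < u := hd.trans hdu
  have hL : log (u / d) ≠ 0 := (log_pos ((one_lt_div hd).2 hdu)).ne'
  rw [rpow_def_of_pos hu, rpow_def_of_pos hd, ← exp_add, breakEvenFraction, sub_mul,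
    mul_assoc, div_mul_cancel₀ _ hL, log_div hu.ne' hd.ne', one_div, log_inv]
  ring_nf

lemma pow_mul_pow_sub_eq_exp (hd : 0 < d) (hdu : d < u) {k n : ℕ} (hk : k ≤ n) :
    u ^ k * d ^ (n - k) = exp ((k - n * breakEvenFraction u d) * log (u / d)) := by
  rw [← rpow_natCast, ← rpow_natCast, Nat.cast_sub hk]
  exact rpow_mul_rpow_sub_eq_exp hd hdu _ _

lemma one_lt_rpow_mul_rpow_iff (hd : 0 < d) (hdu : d < u) {p : ℝ} :
    1 < u ^ p * d ^ (1 - p) ↔ breakEvenFraction u d < p := by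
  rw [rpow_mul_rpow_sub_eq_exp hd hdu, one_lt_exp_iff,
    mul_pos_iff_of_pos_right (log_pos ((one_lt_div hd).2 hdu)), one_mul, sub_pos]

lemma rpow_mul_rpow_lt_one_iff (hd : 0 < d) (hdu : d < u) {p : ℝ} :
    u ^ p * d ^ (1 - p) < 1 ↔ p < breakEvenFraction u d := by
  rw [rpow_mul_rpow_sub_eq_exp hd hdu, exp_lt_one_iff, ← neg_pos, ← neg_mul,
    mul_pos_iff_of_pos_right (log_pos ((one_lt_div hd).2 hdu)), one_mul, neg_pos, sub_neg]

lemma breakEvenFraction_mem_Icc (hd0 : 0 < d) (hd1 : d ≤ 1) (hu : 1 ≤ u) (hdu : d < u) :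
    breakEvenFraction u d ∈ Set.Icc 0 1 := by
  have hL : 0 < log (u / d) := log_pos ((one_lt_div hd0).2 hdu)
  have hlogd : log (1 / d) = -log d := by rw [one_div, log_inv]
  have hlogud : log (u / d) = log u - log d := log_div (by positivity) hd0.ne'
  rw [breakEvenFraction, Set.mem_Icc, div_le_one hL, hlogd]
  exact ⟨div_nonneg (neg_nonneg.2 (log_nonpos hd0.le hd1)) hL.le,
    by linarith [log_nonneg hu]⟩

noncomputable def netProfit (n : ℕ) (u d : ℝ) (k : ℕ) : ℝ :=
  -1 + (∑ j ∈ range (ktilde n u d + 1), if k = j then u ^ j * d ^ (n - j) else 0)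
    + 2 * (if ktilde n u d + 1 ≤ k then (1 : ℝ) else 0)

lemma netProfit_of_ktilde_lt {n k : ℕ} (h : ktilde n u d < k) : netProfit n u d k = 1 := by
  rw [netProfit, sum_eq_zero fun j hj => if_neg (by grind), if_pos (by omega)]
  norm_num

lemma netProfit_of_le_ktilde {n k : ℕ} (h : k ≤ ktilde n u d) :
    netProfit n u d k = -1 + u ^ k * d ^ (n - k) := by
  rw [netProfit, sum_ite_eq, if_pos (mem_range.2 (Nat.lt_succ_of_le h)), if_neg (by omega)]
  ring

end NetProfit

section Convergence

variable {Ω : Type*} [MeasurableSpace Ω] {μ : Measure Ω} [IsProbabilityMeasure μ]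
  {X : ℕ → Ω → ℕ} {p u d : ℝ}

lemma tendstoInMeasure_netProfit_one (h : ∀ n, HasBinomialLaw μ (X n) n p)
    (hX : ∀ n, Measurable (X n)) (hp0 : 0 ≤ p) (hp1 : p ≤ 1)
    (hκ0 : 0 ≤ breakEvenFraction u d) (hκp : breakEvenFraction u d < p) :
    TendstoInMeasure μ (fun n ω => netProfit n u d (X n ω)) atTop (fun _ => 1) := by
  rw [tendstoInMeasure_iff_dist]
  intro ε hε
  refine tendsto_of_tendsto_of_tendsto_of_le_of_le tendsto_const_nhds
    (tendsto_measure_le_abs_sub_of_hasBinomialLaw h hX hp0 hp1 (sub_pos.2 hκp))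
    (fun _ => zero_le) fun n => measure_mono fun ω (hω : ε ≤ _) => ?_
  have hk : X n ω ≤ ktilde n u d := by
    by_contra! hlt
    rw [netProfit_of_ktilde_lt hlt, dist_self] at hω
    exact hε.not_ge hω
  have hXκ : (X n ω : ℝ) ≤ n * breakEvenFraction u d :=
    (Nat.cast_le.2 (ktilde_eq_floor n u d ▸ hk)).trans (Nat.floor_le (by positivity))
  show (p - breakEvenFraction u d) * n ≤ |(X n ω : ℝ) - n * p|
  rw [abs_sub_comm]
  exact le_abs.2 (Or.inl (by linarith))

lemma tendstoInMeasure_netProfit_neg_one (h : ∀ n, HasBinomialLaw μ (X n) n p)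
    (hX : ∀ n, Measurable (X n)) (hp0 : 0 ≤ p) (hp1 : p ≤ 1) (hd : 0 < d) (hdu : d < u)
    (hκ1 : breakEvenFraction u d ≤ 1) (hpκ : p < breakEvenFraction u d) :
    TendstoInMeasure μ (fun n ω => netProfit n u d (X n ω)) atTop (fun _ => -1) := by
  set κ := breakEvenFraction u d with hκ
  obtain ⟨δ, hδ, hpδ⟩ : ∃ δ > 0, p + 2 * δ = κ := ⟨(κ - p) / 2, by linarith, by ring⟩
  have hu : 0 < u := hd.trans hdu
  have hL : 0 < log (u / d) := log_pos ((one_lt_div hd).2 hdu)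
  -- on `X n ≤ (κ - δ) n` the payoff `u ^ X n * d ^ (n - X n)` is at most `r ^ n`
  set r := exp (-δ * log (u / d))
  have hr1 : r < 1 := exp_lt_one_iff.2 (mul_neg_of_neg_of_pos (neg_neg_of_pos hδ) hL)
  rw [tendstoInMeasure_iff_dist]
  intro ε hε
  refine tendsto_of_tendsto_of_tendsto_of_le_of_le' tendsto_const_nhds
    (tendsto_measure_le_abs_sub_of_hasBinomialLaw h hX hp0 hp1 hδ)
    (Eventually.of_forall fun _ => zero_le) ?_
  filter_upwards [(tendsto_pow_atTop_nhds_zero_of_lt_one (exp_pos _).le hr1).eventually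
    (gt_mem_nhds hε)] with n hrn
  refine measure_mono fun ω (hω : ε ≤ _) => ?_
  show δ * n ≤ |(X n ω : ℝ) - n * p|
  by_contra! hlt
  have hn : (0 : ℝ) ≤ n := n.cast_nonneg
  have hXκ : (X n ω : ℝ) ≤ (κ - δ) * n := by
    have hκδ : (κ - δ) * n = n * p + δ * n := by rw [← hpδ]; ring
    linarith [(abs_lt.1 hlt).2]
  have hXn : X n ω ≤ n := by
    have : (κ - δ) * n ≤ n := by nlinarith
    exact_mod_cast hXκ.trans this
  have hk : X n ω ≤ ktilde n u d := by
    rw [ktilde_eq_floor, ← hκ]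
    exact Nat.le_floor (by nlinarith)
  have hpayoff : u ^ X n ω * d ^ (n - X n ω) ≤ r ^ n := by
    rw [pow_mul_pow_sub_eq_exp hd hdu hXn, ← hκ, ← exp_nat_mul]
    refine exp_le_exp.2 ?_
    have := mul_le_mul_of_nonneg_right (show (X n ω : ℝ) - n * κ ≤ -δ * n by linarith) hL.le
    linarith
  rw [netProfit_of_le_ktilde hk, dist_eq, add_sub_cancel_left,
    abs_of_pos (by positivity)] at hω
  exact hrn.not_ge (hω.trans hpayoff)

end Convergence

theorem net_profit_tendsto_in_probability_general
    {Ω : Type*} [MeasurableSpace Ω] (μ : Measure Ω) [IsProbabilityMeasure μ]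
    (p u d : ℝ) (hp0 : 0 < p) (hp1 : p < 1)
    (hd0 : 0 < d) (hd1 : d ≤ 1) (hu : 1 ≤ u) (hne : u ≠ d)
    (X : ℕ → Ω → ℕ) (hXmeas : ∀ n, Measurable (X n))
    (hXbin : ∀ n k : ℕ,
      μ {ω | X n ω = k} = ENNReal.ofReal ((n.choose k : ℝ) * p^k * (1 - p)^(n-k)))
    (T : ℕ → Ω → ℝ)
    (hT : ∀ n ω, T n ω =
      -1 + (∑ k ∈ Finset.range (ktilde n u d + 1),
              if X n ω = k then u^k * d^(n-k) else 0)
        + 2 * (if ktilde n u d + 1 ≤ X n ω then (1 : ℝ) else 0)) :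
    (1 < u ^ p * d ^ (1 - p) →
      TendstoInMeasure μ T atTop (fun _ => (1 : ℝ))) ∧
    (u ^ p * d ^ (1 - p) < 1 →
      TendstoInMeasure μ T atTop (fun _ => (-1 : ℝ))) := by
  have hdu : d < u := lt_of_le_of_ne (hd1.trans hu) hne.symm
  have hκ := breakEvenFraction_mem_Icc hd0 hd1 hu hdu
  have hbin : ∀ n, HasBinomialLaw μ (X n) n p := fun n k => by
    rw [hXbin, eval_bernsteinPolynomial]
  obtain rfl : T = fun n ω => netProfit n u d (X n ω) := funext₂ hT
  exact ⟨fun hwin => tendstoInMeasure_netProfit_one hbin hXmeas hp0.le hp1.le hκ.1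
      ((one_lt_rpow_mul_rpow_iff hd0 hdu).1 hwin),
    fun hlose => tendstoInMeasure_netProfit_neg_one hbin hXmeas hp0.le hp1.le hd0 hdu hκ.2
      ((rpow_mul_rpow_lt_one_iff hd0 hdu).1 hlose)⟩

theorem net_profit_tendsto_in_probability
    {Ω : Type*} [MeasurableSpace Ω] (μ : Measure Ω) [IsProbabilityMeasure μ]
    (p u d : ℝ) (hp0 : 0 < p) (hp1 : p < 1)
    (hd0 : 0 < d) (hd1 : d ≤ 1) (hu : 1 ≤ u) (hne : u ≠ d)
    (hcrit : u ^ p * d ^ (1 - p) ≠ 1)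
    (X : ℕ → Ω → ℕ) (hXmeas : ∀ n, Measurable (X n))
    (hXbin : ∀ n k : ℕ,
      μ {ω | X n ω = k} = ENNReal.ofReal ((n.choose k : ℝ) * p^k * (1 - p)^(n-k)))
    (T : ℕ → Ω → ℝ)
    (hT : ∀ n ω, T n ω =
      -1 + (∑ k ∈ Finset.range (ktilde n u d + 1),
              if X n ω = k then u^k * d^(n-k) else 0)
        + 2 * (if ktilde n u d + 1 ≤ X n ω then (1 : ℝ) else 0)) :
    (1 < u ^ p * d ^ (1 - p) →
      TendstoInMeasure μ T atTop (fun _ => (1 : ℝ))) ∧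
    (u ^ p * d ^ (1 - p) < 1 →
      TendstoInMeasure μ T atTop (fun _ => (-1 : ℝ))) :=
  net_profit_tendsto_in_probability_general μ p u d hp0 hp1 hd0 hd1 hu hne X hXmeas hXbin T hT
end
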